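/- arXiv:1207.0041 — 3 statements merged into one kernel-verified Lean document; each statement's English description precedes it below -/
import Mathlib

section
/- With W + ΔyV := b6(1 - b1 x)(1 - b4 x)(t - b6 x), W - ΔyV := (1 - b2 x)(1 - b3 x)(b6 t - x), R + ΔuS := (b6 q t - x)/b6, and R - ΔuS := (q t - b6 x), the compatibility identity ((W+ΔyV)/(W-ΔyV))(x; qt) · ((R+ΔuS)/(R-ΔuS))(x; t) = ((W+ΔyV)/(W-ΔyV))(x; t) · ((R+ΔuS)/(R-ΔuS))(qx; t) holds as an identity of rational functions in x, t, q, b1, b2, b3, b4, b6 (wherever all denominators are nonzero). -/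
/-!
At `(x; qt)` the last factor `qt - b₆x` of `W+ΔyV` is `(R-ΔuS)(x;t)` and the last factor
`b₆qt - x` of `W-ΔyV` is `b₆·(R+ΔuS)(x;t)`; at `(qx; t)` the factors `R∓ΔuS` become
`q(t - b₆x)` and `q(b₆t - x)/b₆`, which cancel the last factors of `(W±ΔyV)(x;t)`.
So both sides reduce to `(1-b₁x)(1-b₄x) / ((1-b₂x)(1-b₃x))`.
-/

/-- `(W+ΔyV)(x;t) = b₆(1-b₁x)(1-b₄x)(t-b₆x)`. -/
def Wp (b1 b4 b6 x t : ℂ) : ℂ := b6 * (1 - b1 * x) * (1 - b4 * x) * (t - b6 * x)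

/-- `(W-ΔyV)(x;t) = (1-b₂x)(1-b₃x)(b₆t-x)`. -/
def Wm (b2 b3 b6 x t : ℂ) : ℂ := (1 - b2 * x) * (1 - b3 * x) * (b6 * t - x)

/-- `(R+ΔuS)(x;t) = (b₆qt - x)/b₆`. -/
noncomputable def Rp (q b6 x t : ℂ) : ℂ := (b6 * q * t - x) / b6

/-- `(R-ΔuS)(x;t) = qt - b₆x`. -/
def Rm (q b6 x t : ℂ) : ℂ := q * t - b6 * x

section

variable (q t x b1 b2 b3 b4 b6 : ℂ)

lemma Wp_mul_shift : Wp b1 b4 b6 x (q * t) = b6 * ((1 - b1 * x) * (1 - b4 * x)) * Rm q b6 x t := by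
  unfold Wp Rm
  ring

lemma Wm_mul_shift (hb6 : b6 ≠ 0) :
    Wm b2 b3 b6 x (q * t) = b6 * ((1 - b2 * x) * (1 - b3 * x)) * Rp q b6 x t := by
  unfold Wm Rp
  field_simp

lemma Rm_mul_shift : Rm q b6 (q * x) t = q * (t - b6 * x) := by
  unfold Rm
  ring

lemma Rp_mul_shift : Rp q b6 (q * x) t = q * (b6 * t - x) / b6 := by
  unfold Rp
  ring

lemma compatibility_lhs_eq (hb6 : b6 ≠ 0) (h1 : Wm b2 b3 b6 x (q * t) ≠ 0) (h2 : Rm q b6 x t ≠ 0) :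
    (Wp b1 b4 b6 x (q * t) / Wm b2 b3 b6 x (q * t)) * (Rp q b6 x t / Rm q b6 x t)
      = (1 - b1 * x) * (1 - b4 * x) / ((1 - b2 * x) * (1 - b3 * x)) := by
  rw [Wm_mul_shift q t x b2 b3 b6 hb6] at h1 ⊢
  have hB := right_ne_zero_of_mul (left_ne_zero_of_mul h1)
  have hRp := right_ne_zero_of_mul h1
  rw [Wp_mul_shift]
  field_simp

lemma compatibility_rhs_eq (hb6 : b6 ≠ 0) (h3 : Wm b2 b3 b6 x t ≠ 0)
    (h4 : Rm q b6 (q * x) t ≠ 0) :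
    (Wp b1 b4 b6 x t / Wm b2 b3 b6 x t) * (Rp q b6 (q * x) t / Rm q b6 (q * x) t)
      = (1 - b1 * x) * (1 - b4 * x) / ((1 - b2 * x) * (1 - b3 * x)) := by
  rw [Rm_mul_shift] at h4 ⊢
  rw [Rp_mul_shift]
  unfold Wp Wm at *
  obtain ⟨hq, hu⟩ := mul_ne_zero_iff.mp h4
  obtain ⟨hB, hv⟩ := mul_ne_zero_iff.mp h3
  field_simp

end

/-- Compatibility of the spectral and deformation data polynomials:
`((W+ΔyV)/(W-ΔyV))(x;qt)·((R+ΔuS)/(R-ΔuS))(x;t)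
  = ((W+ΔyV)/(W-ΔyV))(x;t)·((R+ΔuS)/(R-ΔuS))(qx;t)`. -/
theorem WV_RS_compatibility (q t x b1 b2 b3 b4 b6 : ℂ) (hb6 : b6 ≠ 0)
    (h1 : Wm b2 b3 b6 x (q * t) ≠ 0) (h2 : Rm q b6 x t ≠ 0)
    (h3 : Wm b2 b3 b6 x t ≠ 0) (h4 : Rm q b6 (q * x) t ≠ 0) :
    (Wp b1 b4 b6 x (q * t) / Wm b2 b3 b6 x (q * t)) * (Rp q b6 x t / Rm q b6 x t)
      = (Wp b1 b4 b6 x t / Wm b2 b3 b6 x t) * (Rp q b6 (q * x) t / Rm q b6 (q * x) t) := by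
  rw [compatibility_lhs_eq q t x b1 b2 b3 b4 b6 hb6 h1 h2,
    compatibility_rhs_eq q t x b1 b2 b3 b4 b6 hb6 h3 h4]
end

section
/- Let q, t, b1, b2, b3, b4, b5, b6, λ, Z be complex numbers with q ≠ 1, t ≠ 0, b5 ≠ 0, b6 ≠ 0, λ ≠ 0. Define κ₊ = -b5 b6, κ₋ = -b6/b5, z₊ = (1/(b5 b6 t)) · (λ - t b6)(b6 λ - t)((b5 t - Z)λ - 1)/λ, z₋ = b5 t (b1 λ - 1)(b2 λ - 1)(b3 λ - 1)(b4 λ - 1) / (λ ((b5 t - Z)λ - 1)) (assuming (b5 t - Z)λ - 1 ≠ 0), ν = (λ/2)(κ₊ z₊ + κ₋ z₋), and μ = (κ₊ z₊ - κ₋ z₋)/(2(q-1)). Then ν² = (1-q)² λ² μ² + b6 (b1 λ - 1)(b2 λ - 1)(b3 λ - 1)(b4 λ - 1)(λ - t b6)(b6 λ - t). -/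
set_option maxHeartbeats 1000000

/-- The quadratic (spectral-curve) relation `ν² = (1-q)²λ²μ² +
b₆(b₁λ-1)(b₂λ-1)(b₃λ-1)(b₄λ-1)(λ-tb₆)(b₆λ-t)` after the change of variables
to `z₊`, `z₋` and `Z`. -/
theorem spectral_quadratic_relation (q t b1 b2 b3 b4 b5 b6 lam Z : ℂ)
    (hq : q ≠ 1) (ht : t ≠ 0) (hb5 : b5 ≠ 0) (hb6 : b6 ≠ 0) (hlam : lam ≠ 0)
    (hden : (b5 * t - Z) * lam - 1 ≠ 0)
    (kp km zp zm ν μ : ℂ)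
    (hkp : kp = -(b5 * b6)) (hkm : km = -(b6 / b5))
    (hzp : zp = (1 / (b5 * b6 * t)) *
        ((lam - t * b6) * (b6 * lam - t) * ((b5 * t - Z) * lam - 1) / lam))
    (hzm : zm = b5 * t * ((b1 * lam - 1) * (b2 * lam - 1) * (b3 * lam - 1) * (b4 * lam - 1)) /
        (lam * ((b5 * t - Z) * lam - 1)))
    (hν : ν = (lam / 2) * (kp * zp + km * zm))
    (hμ : μ = (kp * zp - km * zm) / (2 * (q - 1))) :
    ν ^ 2 = (1 - q) ^ 2 * lam ^ 2 * μ ^ 2 +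
      b6 * (b1 * lam - 1) * (b2 * lam - 1) * (b3 * lam - 1) * (b4 * lam - 1) *
        (lam - t * b6) * (b6 * lam - t) := by
  have hq' : q - 1 ≠ 0 := sub_ne_zero.mpr hq
  set D := (b5 * t - Z) * lam - 1 with hD
  set P := (lam - t * b6) * (b6 * lam - t) with hP
  set Q := (b1 * lam - 1) * (b2 * lam - 1) * (b3 * lam - 1) * (b4 * lam - 1) with hQ
  have hA : kp * zp = -(P * D / (t * lam)) := by
    rw [hkp, hzp]; field_simp
  have hB : km * zm = -(b6 * t * Q / (lam * D)) := by
    rw [hkm, hzm]; field_simp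
  have h1 : (1 - q) ^ 2 * lam ^ 2 * μ ^ 2 =
      lam ^ 2 * ((kp * zp - km * zm) / 2) ^ 2 := by
    rw [hμ]; field_simp; ring
  have key : ν ^ 2 - (1 - q) ^ 2 * lam ^ 2 * μ ^ 2 = lam ^ 2 * (kp * zp) * (km * zm) := by
    rw [h1, hν]; ring
  have hprod : lam ^ 2 * (kp * zp) * (km * zm) = b6 * Q * P := by
    rw [hA, hB]
    field_simp
  have : ν ^ 2 - (1 - q) ^ 2 * lam ^ 2 * μ ^ 2 = b6 * Q * P := key.trans hprod
  rw [hQ, hP] at this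
  linear_combination this
end

section
/- Let Δ, W, W_n, V, Ω, a, Θ, Θ' be complex numbers (with everything scalar), and let M be the 2×2 matrix [[Ω, -aΘ], [aΘ', -Ω - 2V]] and A = (1/W_n) M with W_n ≠ 0. Suppose W_n(W_n - W) = -(Δ²/4)·det M, and suppose W + ΔV ≠ 0 and the matrix I - (Δ/2)A is invertible. Then (I - (Δ/2)A)^{-1} (I + (Δ/2)A) = (1/(W + ΔV)) · [[2W_n - W + Δ(Ω + V), -Δ a Θ], [Δ a Θ', 2W_n - W - Δ(Ω + V)]]. -/
/-!
For any `2 × 2` matrix, `adj (1 - tA) (1 + tA) = (1 - t tr A - t² det A) 1 + 2t A` and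
`det (1 - tA) = 1 - t tr A + t² det A`, so the Cayley transform is a scalar combination of `1`
and `A`. For `A = M / W_n` with `t = Δ/2`, `tr M = -2V` and the relation
`W_n (W_n - W) = -(Δ²/4) det M` turn the two scalars into `(2W_n - W + ΔV) / W_n` and
`(W + ΔV) / W_n`.
-/

open Matrix

namespace Matrix

variable {R K : Type*} [CommRing R] [Field K]

theorem det_one_sub_smul_fin_two (A : Matrix (Fin 2) (Fin 2) R) (t : R) :
    (1 - t • A).det = 1 - t * A.trace + t ^ 2 * A.det := by
  simp only [det_fin_two, trace_fin_two, sub_apply, one_apply_eq, one_apply_ne, smul_apply,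
    smul_eq_mul, ne_eq, zero_ne_one, one_ne_zero, not_false_eq_true, Fin.isValue]
  ring

/-- Cayley–Hamilton `A² = (tr A) A - (det A) 1` collapses the quadratic terms. -/
theorem adjugate_one_sub_smul_mul_one_add_smul_fin_two (A : Matrix (Fin 2) (Fin 2) R) (t : R) :
    (1 - t • A).adjugate * (1 + t • A)
      = (1 - t * A.trace - t ^ 2 * A.det) • 1 + (2 * t) • A := by
  ext i j
  fin_cases i <;> fin_cases j <;>
    simp only [adjugate_fin_two, mul_apply, Fin.sum_univ_two, trace_fin_two, det_fin_two,
      of_apply, cons_val', cons_val_zero, cons_val_one, cons_val_fin_one, add_apply, sub_apply,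
      smul_apply, smul_eq_mul, one_apply_eq, one_apply_ne, ne_eq, zero_ne_one, one_ne_zero,
      not_false_eq_true, Fin.zero_eta, Fin.mk_one, Fin.isValue] <;> ring

/-- When `1 - t • A` is singular both sides are `0`. -/
theorem inv_one_sub_smul_mul_one_add_smul_fin_two (A : Matrix (Fin 2) (Fin 2) K) (t : K) :
    (1 - t • A)⁻¹ * (1 + t • A)
      = (1 - t * A.trace + t ^ 2 * A.det)⁻¹ •
          ((1 - t * A.trace - t ^ 2 * A.det) • 1 + (2 * t) • A) := by
  rw [inv_def, smul_mul, adjugate_one_sub_smul_mul_one_add_smul_fin_two,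
    det_one_sub_smul_fin_two, Ring.inverse_eq_inv']

end Matrix

theorem cayley_transform_evaluation_general (Δ W Wn V Ω a Θ Θ' : ℂ) (hWn : Wn ≠ 0)
    (M : Matrix (Fin 2) (Fin 2) ℂ) (hM : M = !![Ω, -(a * Θ); a * Θ', -Ω - 2 * V])
    (A : Matrix (Fin 2) (Fin 2) ℂ) (hA : A = Wn⁻¹ • M)
    (hdet : Wn * (Wn - W) = -(Δ ^ 2 / 4) * M.det) :
    (1 - (Δ / 2) • A)⁻¹ * (1 + (Δ / 2) • A)
      = (W + Δ * V)⁻¹ •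
          !![2 * Wn - W + Δ * (Ω + V), -(Δ * a * Θ);
             Δ * a * Θ', 2 * Wn - W - Δ * (Ω + V)] := by
  have htrace : A.trace = -(2 * V) / Wn := by
    rw [hA, trace_smul, hM, trace_fin_two_of, div_eq_inv_mul]; ring
  have hdetA : (Δ / 2) ^ 2 * A.det = (W - Wn) / Wn := by
    rw [hA, det_smul, Fintype.card_fin]; field_simp; linear_combination 4 * hdet
  have hden : 1 - Δ / 2 * A.trace + (Δ / 2) ^ 2 * A.det = (W + Δ * V) / Wn := by
    rw [htrace, hdetA]; field_simp; ring
  have hnum : 1 - Δ / 2 * A.trace - (Δ / 2) ^ 2 * A.det = (2 * Wn - W + Δ * V) / Wn := by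
    rw [htrace, hdetA]; field_simp; ring
  rw [inv_one_sub_smul_mul_one_add_smul_fin_two, hden, hnum, hA, hM]
  ext i j
  fin_cases i <;> fin_cases j <;>
    simp only [smul_of, smul_cons, smul_empty, Matrix.smul_apply, Matrix.add_apply, one_apply,
      of_apply, cons_val', cons_val_zero, cons_val_one, cons_val_fin_one, smul_eq_mul,
      Fin.zero_eta, Fin.mk_one, Fin.isValue, ↓reduceIte, zero_ne_one, one_ne_zero] <;>
    field_simp <;> ring

/-- Evaluation of the Cayley transform of the spectral matrix `A = W_n⁻¹ M` with
`M = [[Ω, -aΘ], [aΘ', -Ω-2V]]`, under the bilinear relation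
`W_n(W_n - W) = -(Δ²/4) det M`. -/
theorem cayley_transform_evaluation (Δ W Wn V Ω a Θ Θ' : ℂ) (hWn : Wn ≠ 0)
    (M : Matrix (Fin 2) (Fin 2) ℂ) (hM : M = !![Ω, -(a * Θ); a * Θ', -Ω - 2 * V])
    (A : Matrix (Fin 2) (Fin 2) ℂ) (hA : A = Wn⁻¹ • M)
    (hdet : Wn * (Wn - W) = -(Δ ^ 2 / 4) * M.det)
    (hWV : W + Δ * V ≠ 0)
    (hinv : IsUnit (1 - (Δ / 2) • A)) :
    (1 - (Δ / 2) • A)⁻¹ * (1 + (Δ / 2) • A)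
      = (W + Δ * V)⁻¹ •
          !![2 * Wn - W + Δ * (Ω + V), -(Δ * a * Θ);
             Δ * a * Θ', 2 * Wn - W - Δ * (Ω + V)] :=
  cayley_transform_evaluation_general Δ W Wn V Ω a Θ Θ' hWn M hM A hA hdet
end
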